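/- arXiv:math/0105262 — 2 statements merged into one kernel-verified Lean document; each statement's English description precedes it below -/
import Mathlib

section
/- Let k be a perfect field and f ∈ k[x₁,...,x_n] irreducible over k. If f has a simple solution at some point P ∈ kⁿ (i.e., f ∈ I(P) \ I(P)²), then f is absolutely irreducible, i.e., irreducible over the algebraic closure of k. -/
/-!
Suppose `f = A * B` over `k̄`. As `k` is perfect, the coefficients of `A` and `B` lie in a
finite Galois extension `L/k`. Since `f` is irreducible over `k`, the Galois group permutes the
irreducible factors of `f` over `L` transitively (up to units): the product of the conjugates of
one factor is Galois-invariant, hence defined over `k`, where it divides a power of `f` and so is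
divisible by `f`. One irreducible factor vanishes at `P`, and `P` is `k`-rational, so all of them
do; in particular `A(P) = B(P) = 0`, and the product rule kills every partial derivative of `f`
at `P`, contradicting `f ∉ I(P)²`.
-/

open MvPolynomial

theorem UniqueFactorizationMonoid.exists_prime_dvd_of_map_eq_zero {α β F : Type*}
    [CommMonoidWithZero α] [UniqueFactorizationMonoid α] [MonoidWithZero β]
    [NoZeroDivisors β] [Nontrivial β] [FunLike F α β] [MonoidWithZeroHomClass F α β] (φ : F)
    {a : α} (ha : a ≠ 0) (hφa : φ a = 0) : ∃ p, Prime p ∧ p ∣ a ∧ φ p = 0 := by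
  induction a using UniqueFactorizationMonoid.induction_on_prime with
  | h₁ => exact absurd rfl ha
  | h₂ x hx => exact absurd hφa (hx.map φ).ne_zero
  | h₃ a p ha0 hp ih =>
    rcases mul_eq_zero.1 ((map_mul φ p a).symm.trans hφa) with hp0 | ha'
    · exact ⟨p, hp, dvd_mul_right p a, hp0⟩
    · obtain ⟨q, hq, hqa, hq0⟩ := ih ha0 ha'
      exact ⟨q, hq, hqa.mul_left p, hq0⟩

namespace MvPolynomial

section SimpleZero

variable {σ R : Type*} [CommRing R] [Fintype σ]

theorem sub_sum_pderiv_mem_ker_eval_sq (P : σ → R) (f : MvPolynomial σ R) :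
    f - C (eval P f) - ∑ i, C (eval P (pderiv i f)) * (X i - C (P i)) ∈
      RingHom.ker (eval P) ^ 2 := by
  classical
  induction f using MvPolynomial.induction_on with
  | C a => simp
  | add p q hp hq =>
    convert add_mem hp hq using 1
    simp only [map_add, Finset.sum_add_distrib, add_mul]
    ring
  | mul_X p j hp =>
    have hsum : ∑ i, C (eval P (pderiv i (p * X j))) * (X i - C (P i)) =
        (∑ i, C (eval P (pderiv i p)) * (X i - C (P i))) * C (P j) +
          C (eval P p) * (X j - C (P j)) := by
      simp only [pderiv_mul, pderiv_X, map_add, map_mul, eval_X, add_mul,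
        Finset.sum_add_distrib, Finset.sum_mul]
      congr 1
      · exact Finset.sum_congr rfl fun i _ => by ring
      · simp [Pi.single_apply]
    have key : p * X j - C (eval P (p * X j)) -
        ∑ i, C (eval P (pderiv i (p * X j))) * (X i - C (P i)) =
        (p - C (eval P p) - ∑ i, C (eval P (pderiv i p)) * (X i - C (P i))) * C (P j) +
          (p - C (eval P p)) * (X j - C (P j)) := by
      rw [hsum, map_mul, eval_X, C_mul]
      ring
    rw [key, pow_two]
    refine add_mem (Ideal.mul_mem_right _ _ (pow_two (RingHom.ker (eval P)) ▸ hp))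
      (Ideal.mul_mem_mul ?_ ?_) <;> simp [RingHom.mem_ker]

theorem mem_ker_eval_sq_of_eval_pderiv_eq_zero {P : σ → R} {f : MvPolynomial σ R}
    (hf : eval P f = 0) (hpderiv : ∀ i, eval P (pderiv i f) = 0) :
    f ∈ RingHom.ker (eval P) ^ 2 := by
  simpa [hf, hpderiv] using sub_sum_pderiv_mem_ker_eval_sq P f

end SimpleZero

section Galois

variable {ι k L : Type*} [Field k] [Field L] [Algebra k L]

theorem eval_algebraMap_comp_map_algEquiv (g : Gal(L/k)) (P : ι → k) (p : MvPolynomial ι L) :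
    eval (algebraMap k L ∘ P) (map (g : L →+* L) p) = g (eval (algebraMap k L ∘ P) p) := by
  have hP : (g : L →+* L) ∘ algebraMap k L ∘ P = algebraMap k L ∘ P :=
    _root_.funext fun i => g.commutes (P i)
  have h := map_eval (g : L →+* L) (algebraMap k L ∘ P) p
  rw [hP] at h
  exact h.symm

theorem map_algEquiv_map_algebraMap (g : Gal(L/k)) (p : MvPolynomial ι k) :
    map (g : L →+* L) (map (algebraMap k L) p) = map (algebraMap k L) p := by
  have hg : (g : L →+* L).comp (algebraMap k L) = algebraMap k L := RingHom.ext g.commutes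
  rw [map_map, hg]

variable [FiniteDimensional k L] [IsGalois k L]

theorem mem_range_map_algebraMap_of_forall_map_eq {p : MvPolynomial ι L}
    (hp : ∀ g : Gal(L/k), map (g : L →+* L) p = p) : p ∈ Set.range (map (algebraMap k L)) := by
  refine mem_range_map_iff_coeffs_subset.2 fun c hc =>
    (IsGalois.mem_range_algebraMap_iff_fixed c).2 fun g => ?_
  obtain ⟨m, -, rfl⟩ := mem_coeffs_iff.1 hc
  exact (coeff_map _ _ _).symm.trans (congrArg (coeff m) (hp g))

theorem map_algebraMap_dvd_prod_map_algEquiv {f : MvPolynomial ι k} (hf : Irreducible f)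
    {h : MvPolynomial ι L} (hh : ¬IsUnit h) (hhf : h ∣ map (algebraMap k L) f) :
    map (algebraMap k L) f ∣ ∏ g : Gal(L/k), map (g : L →+* L) h := by
  set N := ∏ g : Gal(L/k), map (g : L →+* L) h
  have hN_fixed (τ : Gal(L/k)) : map (τ : L →+* L) N = N := by
    rw [map_prod]
    simp_rw [map_map]
    exact Fintype.prod_equiv (Equiv.mulLeft τ) _ _ fun g => rfl
  have hh0 : h ≠ 0 := ne_zero_of_dvd_ne_zero
    ((map_ne_zero_iff _ (map_injective _ (algebraMap k L).injective)).2 hf.ne_zero) hhf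
  have hN : N ≠ 0 := Finset.prod_ne_zero_iff.2 fun g _ =>
    (map_ne_zero_iff _ (map_injective _ g.injective)).2 hh0
  obtain ⟨u, hu⟩ : N ∣ map (algebraMap k L) (f ^ Fintype.card Gal(L/k)) := by
    rw [map_pow, ← Finset.card_univ, ← Finset.prod_const]
    exact Finset.prod_dvd_prod_of_dvd _ _ fun g _ =>
      map_algEquiv_map_algebraMap g f ▸ map_dvd _ hhf
  have hu_fixed (τ : Gal(L/k)) : map (τ : L →+* L) u = u := by
    refine mul_left_cancel₀ hN ?_
    rw [← hu, ← map_algEquiv_map_algebraMap τ, hu, map_mul, hN_fixed]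
  obtain ⟨N₀, hN₀⟩ := mem_range_map_algebraMap_of_forall_map_eq hN_fixed
  obtain ⟨u₀, hu₀⟩ := mem_range_map_algebraMap_of_forall_map_eq hu_fixed
  have hN₀_dvd : N₀ ∣ f ^ Fintype.card Gal(L/k) :=
    ⟨u₀, map_injective _ (algebraMap k L).injective (by rw [map_mul, hN₀, hu₀, hu])⟩
  obtain ⟨i, -, hi⟩ := (dvd_prime_pow hf.prime _).1 hN₀_dvd
  have hi0 : i ≠ 0 := by
    rintro rfl
    have hNu : IsUnit N := hN₀ ▸ (associated_one_iff_isUnit.1 hi).map _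
    refine hh (isUnit_of_dvd_unit ?_ hNu)
    have h_one : map ((1 : Gal(L/k)) : L →+* L) h = h := map_id h
    exact h_one ▸ Finset.dvd_prod_of_mem _ (Finset.mem_univ 1)
  rw [← hN₀]
  exact map_dvd _ ((dvd_pow_self f hi0).trans hi.symm.dvd)

theorem exists_associated_map_algEquiv_of_dvd_map {f : MvPolynomial ι k} (hf : Irreducible f)
    {h g : MvPolynomial ι L} (hh : Irreducible h) (hhf : h ∣ map (algebraMap k L) f)
    (hg : Irreducible g) (hgf : g ∣ map (algebraMap k L) f) :
    ∃ τ : Gal(L/k), Associated (map (τ : L →+* L) h) g := by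
  obtain ⟨τ, -, hτ⟩ := (hg.prime.dvd_finsetProd_iff _).1
    (hgf.trans (map_algebraMap_dvd_prod_map_algEquiv hf hh.not_isUnit hhf))
  have hτh : Irreducible (map (τ : L →+* L) h) := hh.map (mapEquiv ι (τ : L ≃+* L))
  exact ⟨τ, (hg.associated_of_dvd hτh hτ).symm⟩

theorem eval_eq_zero_of_dvd_map {f : MvPolynomial ι k} (hf : Irreducible f) {P : ι → k}
    (hP : eval P f = 0) {A : MvPolynomial ι L} (hA : ¬IsUnit A)
    (hAf : A ∣ map (algebraMap k L) f) : eval (algebraMap k L ∘ P) A = 0 := by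
  set Q := algebraMap k L ∘ P
  have hfL : map (algebraMap k L) f ≠ 0 :=
    (map_ne_zero_iff _ (map_injective _ (algebraMap k L).injective)).2 hf.ne_zero
  obtain ⟨g, hg, hgA⟩ :=
    WfDvdMonoid.exists_irreducible_factor hA (ne_zero_of_dvd_ne_zero hfL hAf)
  obtain ⟨h, hh, hhf, hhQ⟩ := UniqueFactorizationMonoid.exists_prime_dvd_of_map_eq_zero
    (eval Q) hfL (by rw [← map_eval, hP, map_zero])
  obtain ⟨τ, u, hu⟩ :=
    exists_associated_map_algEquiv_of_dvd_map hf hh.irreducible hhf hg (hgA.trans hAf)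
  have hgQ : eval Q g = 0 := by
    rw [← hu, map_mul, eval_algebraMap_comp_map_algEquiv, hhQ, map_zero, zero_mul]
  exact zero_dvd_iff.1 (hgQ ▸ map_dvd (eval Q) hgA)

theorem irreducible_map_algebraMap_of_eval_pderiv_ne_zero {f : MvPolynomial ι k}
    (hf : Irreducible f) {P : ι → k} (hP : eval P f = 0) {i : ι} (hi : eval P (pderiv i f) ≠ 0) :
    Irreducible (map (algebraMap k L) f) := by
  have hfQ : eval (algebraMap k L ∘ P) (map (algebraMap k L) f) = 0 := by
    rw [← map_eval, hP, map_zero]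
  refine irreducible_iff.2 ⟨fun hu => not_isUnit_zero (hfQ ▸ hu.map _), fun A B hAB => ?_⟩
  by_contra! ⟨hA, hB⟩
  apply hi
  apply (algebraMap k L).injective
  rw [map_eval, ← pderiv_map, hAB, pderiv_mul, map_add, map_mul, map_mul,
    eval_eq_zero_of_dvd_map hf hP hA (hAB ▸ dvd_mul_right A B),
    eval_eq_zero_of_dvd_map hf hP hB (hAB ▸ dvd_mul_left B A)]
  simp

end Galois

end MvPolynomial

open MvPolynomial

/-- An irreducible polynomial over a perfect field having a simple solution
(`f ∈ I(P) \ I(P)²`) is absolutely irreducible. -/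
theorem stmt_2 {k : Type*} [Field k] [PerfectField k] {n : ℕ}
    (f : MvPolynomial (Fin n) k) (hf : Irreducible f)
    (P : Fin n → k)
    (h0 : f ∈ RingHom.ker (eval P))
    (h2 : f ∉ (RingHom.ker (eval P)) ^ 2) :
    Irreducible (MvPolynomial.map (algebraMap k (AlgebraicClosure k)) f) := by
  have hP : eval P f = 0 := h0
  obtain ⟨i, hi⟩ : ∃ i, eval P (pderiv i f) ≠ 0 := by
    by_contra! h
    exact h2 (mem_ker_eval_sq_of_eval_pderiv_eq_zero hP h)
  set K := AlgebraicClosure k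
  have hfQ : eval (algebraMap k K ∘ P) (map (algebraMap k K) f) = 0 := by
    rw [← map_eval, hP, map_zero]
  refine irreducible_iff.2 ⟨fun hu => not_isUnit_zero (hfQ ▸ hu.map _), fun A B hAB => ?_⟩
  obtain ⟨L, hL⟩ : ∃ L : FiniteGaloisIntermediateField k K,
      (A.coeffs ∪ B.coeffs : Set K) ⊆ Set.range (algebraMap L K) :=
    ⟨.adjoin k _, fun x hx => ⟨⟨x, FiniteGaloisIntermediateField.subset_adjoin k _ hx⟩, rfl⟩⟩
  obtain ⟨A', rfl⟩ := mem_range_map_iff_coeffs_subset.2 (Set.subset_union_left.trans hL)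
  obtain ⟨B', rfl⟩ := mem_range_map_iff_coeffs_subset.2 (Set.subset_union_right.trans hL)
  have hfL : map (algebraMap k L) f = A' * B' := by
    refine map_injective _ (algebraMap L K).injective ?_
    rw [map_map, ← IsScalarTower.algebraMap_eq, hAB, map_mul]
  exact ((irreducible_map_algebraMap_of_eval_pderiv_ne_zero hf hP hi).isUnit_or_isUnit hfL).imp
    (·.map _) (·.map _)
end

section
/- The polynomial x⁵ + y⁵ + z⁵ ∈ F₂[x,y,z] is absolutely irreducible. -/
open MvPolynomial Polynomial

noncomputable section

abbrev K := AlgebraicClosure (ZMod 2)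
abbrev R1 := MvPolynomial (Fin 1) K
abbrev R2 := MvPolynomial (Fin 2) K

theorem no_fifth_root (c : R2) : c ^ 5 ≠ X 0 ^ 5 + X 1 ^ 5 := by
  intro h
  have e := congrArg (finSuccEquiv K 1) h
  rw [map_pow, map_add, map_pow, map_pow, finSuccEquiv_X_zero] at e
  have h1 : (1 : Fin 2) = Fin.succ 0 := rfl
  rw [h1, finSuccEquiv_X_succ] at e
  set d := finSuccEquiv K 1 c with hd
  have hdeg : d.natDegree = 1 := by
    have h5 : (d ^ 5).natDegree = 5 := by
      rw [e]
      rw [← Polynomial.C_pow]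
      exact Polynomial.natDegree_X_pow_add_C
    rw [Polynomial.natDegree_pow] at h5
    omega
  set a := d.coeff 1 with ha
  set b := d.coeff 0 with hb
  have hab : d = Polynomial.C a * Polynomial.X + Polynomial.C b :=
    Polynomial.eq_X_add_C_of_natDegree_le_one (le_of_eq hdeg)
  have key : ∀ s t : Polynomial R1, (s + t) ^ 4 = s ^ 4 + t ^ 4 := fun s t => by
    have := add_pow_char_pow (p := 2) (n := 2) (x := s) (y := t)
    norm_num at this; exact this
  have e5 : (Polynomial.C a) ^ 5 * Polynomial.X ^ 5
      + (Polynomial.C a) ^ 4 * Polynomial.C b * Polynomial.X ^ 4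
      + Polynomial.C a * (Polynomial.C b) ^ 4 * Polynomial.X + (Polynomial.C b) ^ 5
      = Polynomial.X ^ 5 + (Polynomial.C (X 0 : R1)) ^ 5 := by
    rw [← e, hab, show (Polynomial.C a * Polynomial.X + Polynomial.C b) ^ 5
      = (Polynomial.C a * Polynomial.X + Polynomial.C b) ^ 4
        * (Polynomial.C a * Polynomial.X + Polynomial.C b) from by ring, key]
    ring
  have c5 := congrArg (fun p => Polynomial.coeff p 5) e5
  have c4 := congrArg (fun p => Polynomial.coeff p 4) e5
  have c0 := congrArg (fun p => Polynomial.coeff p 0) e5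
  simp only [← Polynomial.C_pow, ← Polynomial.C_mul, Polynomial.coeff_add,
    Polynomial.coeff_C_mul, Polynomial.coeff_X_pow, Polynomial.coeff_X,
    Polynomial.coeff_C] at c5 c4 c0
  norm_num at c5 c4 c0
  have hbz : b = 0 := by
    rcases c4 with h' | h'
    · rw [h'] at c5; simp at c5
    · exact h'
  rw [hbz] at c0
  simp at c0
  exact pow_ne_zero 5 (MvPolynomial.X_ne_zero (0 : Fin 1)) c0.symm

set_option synthInstance.maxHeartbeats 1000000 in
set_option maxHeartbeats 1000000 in
/-- The polynomial `x⁵ + y⁵ + z⁵ ∈ F₂[x,y,z]` is absolutely irreducible,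
i.e. irreducible over the algebraic closure of `F₂`. -/
theorem stmt_14 :
    Irreducible (MvPolynomial.map (algebraMap (ZMod 2) (AlgebraicClosure (ZMod 2)))
      (X 0 ^ 5 + X 1 ^ 5 + X 2 ^ 5 : MvPolynomial (Fin 3) (ZMod 2))) := by
  have hmap : MvPolynomial.map (algebraMap (ZMod 2) K)
      (X 0 ^ 5 + X 1 ^ 5 + X 2 ^ 5 : MvPolynomial (Fin 3) (ZMod 2))
      = (X 0 ^ 5 + X 1 ^ 5 + X 2 ^ 5 : MvPolynomial (Fin 3) K) := by
    simp [map_add, map_pow]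
  rw [hmap, ← MulEquiv.irreducible_iff (finSuccEquiv K 2)]
  have h1 : (1 : Fin 3) = Fin.succ 0 := rfl
  have h2 : (2 : Fin 3) = Fin.succ 1 := rfl
  rw [map_add, map_add, map_pow, map_pow, map_pow, finSuccEquiv_X_zero, h1, h2,
    finSuccEquiv_X_succ, finSuccEquiv_X_succ, ← Polynomial.C_pow, ← Polynomial.C_pow,
    add_assoc, ← Polynomial.C_add]
  set a : R2 := X 0 ^ 5 + X 1 ^ 5 with ha
  have hmonic : (Polynomial.X ^ 5 + Polynomial.C a).Monic :=
    Polynomial.monic_X_pow_add (lt_of_le_of_lt Polynomial.degree_C_le (by norm_num))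
  haveI : IsIntegrallyClosed R2 := inferInstance
  rw [hmonic.irreducible_iff_irreducible_map_fraction_map (K := FractionRing R2)]
  haveI : CharP (FractionRing R2) 2 :=
    charP_of_injective_algebraMap (IsFractionRing.injective R2 (FractionRing R2)) 2
  rw [Polynomial.map_add, Polynomial.map_pow, Polynomial.map_X, Polynomial.map_C,
    show Polynomial.C (algebraMap R2 (FractionRing R2) a)
      = -Polynomial.C (algebraMap R2 (FractionRing R2) a) from (CharTwo.neg_eq _).symm,
    ← sub_eq_add_neg]
  apply X_pow_sub_C_irreducible_of_prime (by norm_num)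
  intro b hb
  have hint : IsIntegral R2 b := by
    refine ⟨Polynomial.X ^ 5 - Polynomial.C a, Polynomial.monic_X_pow_sub_C a (by norm_num), ?_⟩
    simp [hb]
  obtain ⟨c, hc⟩ := IsIntegrallyClosed.isIntegral_iff.mp hint
  have : algebraMap R2 (FractionRing R2) (c ^ 5) = algebraMap R2 (FractionRing R2) a := by
    rw [map_pow, hc, hb]
  exact no_fifth_root c (IsFractionRing.injective R2 (FractionRing R2) this)
end
end
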